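/- Under the diagonal approximation with energy-preserving scalings E_τ[rⱼ(τ)²] = 1 for all j, the teleported entropy lower bound dominates the baseline: H^lb_tele = H^lb₀ + (1/2) Σᵢ πᵢ Σⱼ Δψ_{i,j} with each Δψ_{i,j} = log(1+α_{i,j}) − E_τ[log(1 + α_{i,j} rⱼ(τ)²)] ≥ 0, hence H^lb_tele ≥ H^lb₀. -/

import Mathlib

open MeasureTheory

/-! Jensen's inequality for the concave logarithm gives
`E[log (1 + α q)] ≤ log (1 + α E[q]) = log (1 + α)` when `E[q] = 1`, so every gap `Δψ_{i,j}`
is nonnegative; the identity for `H^lb_tele` is a rearrangement of finite sums. -/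

-- The lower bound `c > 0` keeps the values in a closed set on which `log` is concave and
-- continuous, as `ConcaveOn.le_map_integral` requires.
theorem integral_log_le_log_integral {T : Type*} [MeasurableSpace T] {ν : Measure T}
    [IsProbabilityMeasure ν] {f : T → ℝ} {c : ℝ} (hc : 0 < c) (hfc : ∀ᵐ t ∂ν, c ≤ f t)
    (hf : Integrable f ν) (hlogf : Integrable (fun t => Real.log (f t)) ν) :
    ∫ t, Real.log (f t) ∂ν ≤ Real.log (∫ t, f t ∂ν) := by
  have hpos : Set.Ici c ⊆ Set.Ioi 0 := fun x hx => hc.trans_le hx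
  exact (strictConcaveOn_log_Ioi.concaveOn.subset hpos (convex_Ici c)).le_map_integral
    (Real.continuousOn_log.mono fun x hx => (hpos hx).ne') isClosed_Ici hfc hf hlogf

theorem integral_log_one_add_mul_le {T : Type*} [MeasurableSpace T] {ν : Measure T}
    [IsProbabilityMeasure ν] {a : ℝ} (ha : 0 ≤ a) {q : T → ℝ} (hq : ∀ᵐ t ∂ν, 0 ≤ q t)
    (hqint : Integrable q ν) (hlogint : Integrable (fun t => Real.log (1 + a * q t)) ν) :
    ∫ t, Real.log (1 + a * q t) ∂ν ≤ Real.log (1 + a * ∫ t, q t ∂ν) := by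
  have hle : ∀ᵐ t ∂ν, (1 : ℝ) ≤ 1 + a * q t := by
    filter_upwards [hq] with t ht
    linarith [mul_nonneg ha ht]
  have hint : Integrable (fun t => 1 + a * q t) ν := (integrable_const 1).add (hqint.const_mul a)
  calc ∫ t, Real.log (1 + a * q t) ∂ν ≤ Real.log (∫ t, 1 + a * q t ∂ν) :=
        integral_log_le_log_integral one_pos hle hint hlogint
    _ = Real.log (1 + a * ∫ t, q t ∂ν) := by
        rw [integral_add (integrable_const 1) (hqint.const_mul a), integral_const_mul]
        simp

theorem sub_sum_mul_add_half_sum_eq {ι κ : Type*} (s : Finset ι) (t : Finset κ)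
    (H : ℝ) (w c : ι → ℝ) (f g : ι → κ → ℝ) :
    H - ∑ i ∈ s, w i * (c i + 1 / 2 * ∑ j ∈ t, g i j) =
      H - ∑ i ∈ s, w i * (c i + 1 / 2 * ∑ j ∈ t, f i j) +
        1 / 2 * ∑ i ∈ s, w i * ∑ j ∈ t, (f i j - g i j) := by
  have hterm : ∀ i, w i * (c i + 1 / 2 * ∑ j ∈ t, g i j) =
      w i * (c i + 1 / 2 * ∑ j ∈ t, f i j) - 1 / 2 * (w i * ∑ j ∈ t, (f i j - g i j)) := by
    intro i
    rw [Finset.sum_sub_distrib]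
    ring
  rw [Finset.sum_congr rfl fun i _ => hterm i, Finset.sum_sub_distrib, ← Finset.mul_sum]
  ring

theorem stmt15_general {T : Type*} [MeasurableSpace T] (ν : Measure T)
    [IsProbabilityMeasure ν] {K m : ℕ}
    (π' : Fin K → ℝ) (hπpos : ∀ i, 0 < π' i)
    (α : Fin K → Fin m → ℝ) (hα : ∀ i j, 0 ≤ α i j)
    -- `q j t` is the squared scaling `rⱼ(τ)²`, positive with mean `1`:
    (q : Fin m → T → ℝ)
    (hqpos : ∀ j, ∀ᵐ t ∂ν, 0 < q j t)
    (hqint : ∀ j, Integrable (q j) ν)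
    (hqmean : ∀ j, ∫ t, q j t ∂ν = 1)
    (hlogint : ∀ i j, Integrable (fun t => Real.log (1 + α i j * q j t)) ν)
    -- the per-coordinate gaps `Δψ_{i,j}`:
    (Δψ : Fin K → Fin m → ℝ)
    (hΔψ : ∀ i j, Δψ i j =
      Real.log (1 + α i j) - ∫ t, Real.log (1 + α i j * q j t) ∂ν)
    -- the baseline and teleported entropy lower bounds:
    (Hx Hlb0 Hlbtele : ℝ)
    (hHlb0 : Hlb0 = Hx - ∑ i, π' i * (-Real.log (π' i) +
      (1 / 2) * ∑ j, Real.log (1 + α i j)))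
    (hHlbtele : Hlbtele = Hx - ∑ i, π' i * (-Real.log (π' i) +
      (1 / 2) * ∑ j, ∫ t, Real.log (1 + α i j * q j t) ∂ν)) :
    Hlbtele = Hlb0 + (1 / 2) * ∑ i, π' i * ∑ j, Δψ i j ∧
      (∀ i j, 0 ≤ Δψ i j) ∧ Hlb0 ≤ Hlbtele := by
  have hgap : ∀ i j, 0 ≤ Δψ i j := fun i j => by
    have h := integral_log_one_add_mul_le (hα i j) ((hqpos j).mono fun _ ht => ht.le)
      (hqint j) (hlogint i j)
    rw [hqmean j, mul_one] at h
    rw [hΔψ i j]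
    linarith
  have hdecomp : Hlbtele = Hlb0 + (1 / 2) * ∑ i, π' i * ∑ j, Δψ i j := by
    simp only [hHlbtele, hHlb0, hΔψ]
    exact sub_sum_mul_add_half_sum_eq _ _ _ _ _ _ _
  have hsum : 0 ≤ ∑ i, π' i * ∑ j, Δψ i j :=
    Finset.sum_nonneg fun i _ => mul_nonneg (hπpos i).le (Finset.sum_nonneg fun j _ => hgap i j)
  exact ⟨hdecomp, hgap, by linarith⟩

/-- Under the diagonal approximation with energy-preserving
scalings `E_τ[rⱼ(τ)²] = 1` for all `j`, the teleported entropy lower bound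
dominates the baseline:
`H^lb_tele = H^lb₀ + (1/2) Σᵢ πᵢ Σⱼ Δψ_{i,j}` with each
`Δψ_{i,j} = log(1+α_{i,j}) − E_τ[log(1 + α_{i,j} rⱼ(τ)²)] ≥ 0`, and hence
`H^lb_tele ≥ H^lb₀`. -/
theorem stmt15 {T : Type*} [MeasurableSpace T] (ν : Measure T)
    [IsProbabilityMeasure ν] {K m : ℕ}
    (π' : Fin K → ℝ) (hπpos : ∀ i, 0 < π' i) (hπsum : ∑ i, π' i = 1)
    (α : Fin K → Fin m → ℝ) (hα : ∀ i j, 0 ≤ α i j)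
    -- `q j t` is the squared scaling `rⱼ(τ)²`, positive with mean `1`:
    (q : Fin m → T → ℝ)
    (hqpos : ∀ j, ∀ᵐ t ∂ν, 0 < q j t)
    (hqint : ∀ j, Integrable (q j) ν)
    (hqmean : ∀ j, ∫ t, q j t ∂ν = 1)
    (hlogint : ∀ i j, Integrable (fun t => Real.log (1 + α i j * q j t)) ν)
    -- the per-coordinate gaps `Δψ_{i,j}`:
    (Δψ : Fin K → Fin m → ℝ)
    (hΔψ : ∀ i j, Δψ i j =
      Real.log (1 + α i j) - ∫ t, Real.log (1 + α i j * q j t) ∂ν)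
    -- the baseline and teleported entropy lower bounds:
    (Hx Hlb0 Hlbtele : ℝ)
    (hHlb0 : Hlb0 = Hx - ∑ i, π' i * (-Real.log (π' i) +
      (1 / 2) * ∑ j, Real.log (1 + α i j)))
    (hHlbtele : Hlbtele = Hx - ∑ i, π' i * (-Real.log (π' i) +
      (1 / 2) * ∑ j, ∫ t, Real.log (1 + α i j * q j t) ∂ν)) :
    Hlbtele = Hlb0 + (1 / 2) * ∑ i, π' i * ∑ j, Δψ i j ∧
      (∀ i j, 0 ≤ Δψ i j) ∧ Hlb0 ≤ Hlbtele :=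
  stmt15_general ν π' hπpos α hα q hqpos hqint hqmean hlogint Δψ hΔψ Hx Hlb0 Hlbtele hHlb0 hHlbtele
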